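/- arXiv:1806.04246 — 5 statements merged into one kernel-verified Lean document; each statement's English description precedes it below -/
import Mathlib

section
/- Let c ∈ (0, 1/4) and a ∈ (1/2, 1/2 + √(1/4 − c)). Define f(x) = √(1−x) − √(1 − x − c/x). Then for every x ∈ [1/2, a], f(x) ≤ max(f(1/2), f(a)). -/
/-!
Rationalising, `f x = c / D x` with `D x = √(x² - x³) + √(x² - x³ - c x)`. Both radicands are
concave cubics on `[1/3, ∞)`, so `D` is a positive concave function on `[1/2, a]`; it attains its
minimum over the interval at an endpoint, hence `f = c / D` attains its maximum there.
-/

open Real Set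

lemma ConcaveOn.sqrt {s : Set ℝ} {q : ℝ → ℝ} (hq : ConcaveOn ℝ s q) (h0 : ∀ x ∈ s, 0 ≤ q x) :
    ConcaveOn ℝ s fun x => √(q x) := by
  refine ⟨hq.1, fun x hx y hy a b ha hb hab => ?_⟩
  calc a • √(q x) + b • √(q y) ≤ √(a • q x + b • q y) :=
        strictConcaveOn_sqrt.concaveOn.2 (h0 x hx) (h0 y hy) ha hb hab
    _ ≤ √(q (a • x + b • y)) := Real.sqrt_le_sqrt (hq.2 hx hy ha hb hab)

lemma concaveOn_sq_sub_cube_sub_mul (c : ℝ) :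
    ConcaveOn ℝ (Ici (1/3)) fun x : ℝ => x ^ 2 - x ^ 3 - c * x := by
  refine ⟨convex_Ici _, fun x hx y hy p q hp hq hpq => ?_⟩
  obtain rfl : q = 1 - p := by linarith
  simp only [smul_eq_mul]
  have hx : 1/3 ≤ x := hx
  have hy : 1/3 ≤ y := hy
  -- the concavity defect is `p (1 - p) (x - y)² ((1 + p) x + (2 - p) y - 1)`
  have hfactor : 0 ≤ (1 + p) * x + (2 - p) * y - 1 := by nlinarith
  nlinarith [mul_nonneg (mul_nonneg (mul_nonneg hp hq) (sq_nonneg (x - y))) hfactor]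

lemma div_le_max_of_concaveOn {D : ℝ → ℝ} {c a b x : ℝ} (hD : ConcaveOn ℝ (Icc a b) D)
    (hpos : ∀ y ∈ Icc a b, 0 < D y) (hc : 0 ≤ c) (hx : x ∈ Icc a b) :
    c / D x ≤ max (c / D a) (c / D b) := by
  have hab : a ≤ b := hx.1.trans hx.2
  have ha : a ∈ Icc a b := left_mem_Icc.2 hab
  have hb : b ∈ Icc a b := right_mem_Icc.2 hab
  rcases min_le_iff.1 (hD.min_le_of_mem_Icc ha hb hx) with h | h
  · exact le_max_of_le_left (div_le_div_of_nonneg_left hc (hpos a ha) h)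
  · exact le_max_of_le_right (div_le_div_of_nonneg_left hc (hpos b hb) h)

lemma sqrt_one_sub_sub_sqrt_eq_div {c x : ℝ} (hx : 0 < x) (hc : 0 < c) (hcx : c ≤ x - x ^ 2) :
    √(1 - x) - √(1 - x - c / x) = c / (√(x ^ 2 - x ^ 3) + √(x ^ 2 - x ^ 3 - c * x)) := by
  have hu : 0 < 1 - x := by nlinarith
  have hv : 0 ≤ 1 - x - c / x := by
    rw [sub_nonneg, div_le_iff₀ hx]; nlinarith
  have e1 : √(x ^ 2 - x ^ 3) = x * √(1 - x) := by
    rw [show x ^ 2 - x ^ 3 = x ^ 2 * (1 - x) by ring, Real.sqrt_mul (sq_nonneg x),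
      Real.sqrt_sq hx.le]
  have e2 : √(x ^ 2 - x ^ 3 - c * x) = x * √(1 - x - c / x) := by
    rw [show x ^ 2 - x ^ 3 - c * x = x ^ 2 * (1 - x - c / x) by field_simp,
      Real.sqrt_mul (sq_nonneg x), Real.sqrt_sq hx.le]
  have hsum : 0 < √(1 - x) + √(1 - x - c / x) := by positivity
  rw [e1, e2, ← mul_add, eq_div_iff (by positivity)]
  calc (√(1 - x) - √(1 - x - c / x)) * (x * (√(1 - x) + √(1 - x - c / x)))
      = x * (√(1 - x) ^ 2 - √(1 - x - c / x) ^ 2) := by ring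
    _ = c := by rw [Real.sq_sqrt hu.le, Real.sq_sqrt hv]; field_simp; ring

lemma le_sub_sq_of_mem_Icc {c a x : ℝ} (hc : c ≤ 1/4) (ha : a < 1/2 + √(1/4 - c))
    (hx : x ∈ Icc (1/2) a) : c ≤ x - x ^ 2 := by
  have ht : √(1/4 - c) ^ 2 = 1/4 - c := Real.sq_sqrt (by linarith)
  obtain ⟨hx1, hx2⟩ := hx
  -- `x - x² - c = (1/4 - c) - (x - 1/2)²`
  nlinarith [Real.sqrt_nonneg (1/4 - c)]

theorem stmt0 (c a : ℝ) (hc : c ∈ Set.Ioo (0 : ℝ) (1/4))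
    (ha : a ∈ Set.Ioo (1/2 : ℝ) (1/2 + Real.sqrt (1/4 - c)))
    (f : ℝ → ℝ) (hf : ∀ x, f x = Real.sqrt (1 - x) - Real.sqrt (1 - x - c / x)) :
    ∀ x ∈ Set.Icc (1/2 : ℝ) a, f x ≤ max (f (1/2)) (f a) := by
  have hcx := fun x (hx : x ∈ Icc (1/2 : ℝ) a) => le_sub_sq_of_mem_Icc hc.2.le ha.2 hx
  have hfD : ∀ x ∈ Icc (1/2 : ℝ) a,
      f x = c / (√(x ^ 2 - x ^ 3) + √(x ^ 2 - x ^ 3 - c * x)) := fun x hx => by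
    rw [hf, sqrt_one_sub_sub_sqrt_eq_div (by linarith [hx.1]) hc.1 (hcx x hx)]
  have hDpos : ∀ x ∈ Icc (1/2 : ℝ) a, 0 < √(x ^ 2 - x ^ 3) + √(x ^ 2 - x ^ 3 - c * x) :=
    fun x hx => by
      have : 0 < x ^ 2 - x ^ 3 := by nlinarith [hx.1, hc.1, hcx x hx]
      positivity
  have hsub : Icc (1/2 : ℝ) a ⊆ Ici (1/3) := fun x hx => le_trans (by norm_num) hx.1
  have hcubic : ConcaveOn ℝ (Ici (1/3)) fun x : ℝ => x ^ 2 - x ^ 3 := by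
    simpa using concaveOn_sq_sub_cube_sub_mul 0
  have hDconc : ConcaveOn ℝ (Icc (1/2 : ℝ) a)
      fun x => √(x ^ 2 - x ^ 3) + √(x ^ 2 - x ^ 3 - c * x) := by
    refine ((hcubic.subset hsub (convex_Icc _ _)).sqrt ?_).add
      (((concaveOn_sq_sub_cube_sub_mul c).subset hsub (convex_Icc _ _)).sqrt ?_)
    all_goals intro x hx; nlinarith [hx.1, hc.1, hcx x hx]
  intro x hx
  rw [hfD x hx, hfD _ (left_mem_Icc.2 ha.1.le), hfD _ (right_mem_Icc.2 ha.1.le)]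
  exact div_le_max_of_concaveOn hDconc hDpos hc.1.le hx
end

section
/- For every ρ ∈ (0, π/2), the function f(x) = arccot(cos ρ · tan x) is concave on the interval (0, π/2). -/
/-- The inverse cotangent, taking values in `(0, π)`. -/
noncomputable def arccot (x : ℝ) : ℝ := Real.pi / 2 - Real.arctan x

/-!
Writing `c = cos ρ ∈ [0, 1]`, the derivative of `x ↦ arccot (c tan x)` is
`-c / (cos² x + c² sin² x) = -c / (1 - (1 - c²) sin² x)`. On `(0, π/2)` the denominator is
positive and decreasing because `sin²` increases there, so the derivative is antitone.
-/

open Real Set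

lemma concaveOn_Ioo_of_hasDerivAt_of_antitoneOn {a b : ℝ} {f f' : ℝ → ℝ}
    (hf : ∀ x ∈ Ioo a b, HasDerivAt f (f' x) x) (hf' : AntitoneOn f' (Ioo a b)) :
    ConcaveOn ℝ (Ioo a b) f := by
  have hderiv : EqOn (deriv f) f' (Ioo a b) := fun x hx => (hf x hx).deriv
  refine AntitoneOn.concaveOn_of_deriv (convex_Ioo a b)
    (fun x hx => (hf x hx).continuousAt.continuousWithinAt) ?_ ?_
  · rw [interior_Ioo]
    exact fun x hx => (hf x hx).differentiableAt.differentiableWithinAt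
  · rw [interior_Ioo]
    exact hf'.congr hderiv.symm

lemma hasDerivAt_arccot (x : ℝ) : HasDerivAt arccot (-(1 / (1 + x ^ 2))) x :=
  (hasDerivAt_arctan x).const_sub (π / 2)

lemma one_sub_mul_sin_sq_eq (c x : ℝ) :
    1 - (1 - c ^ 2) * sin x ^ 2 = cos x ^ 2 + c ^ 2 * sin x ^ 2 := by
  linear_combination -sin_sq_add_cos_sq x

lemma one_sub_mul_sin_sq_pos (c : ℝ) {x : ℝ} (hx : cos x ≠ 0) :
    0 < 1 - (1 - c ^ 2) * sin x ^ 2 := by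
  rw [one_sub_mul_sin_sq_eq]
  positivity

lemma hasDerivAt_arccot_const_mul_tan (c : ℝ) {x : ℝ} (hx : cos x ≠ 0) :
    HasDerivAt (fun x => arccot (c * tan x)) (-c / (1 - (1 - c ^ 2) * sin x ^ 2)) x := by
  refine ((hasDerivAt_arccot (c * tan x)).comp x ((hasDerivAt_tan hx).const_mul c)).congr_deriv ?_
  have hden := one_sub_mul_sin_sq_pos c hx
  rw [one_sub_mul_sin_sq_eq] at hden ⊢
  rw [tan_eq_sin_div_cos]
  field_simp

lemma monotoneOn_sin_sq : MonotoneOn (fun x => sin x ^ 2) (Icc 0 (π / 2)) := by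
  intro x hx y hy hxy
  have hsin : sin x ≤ sin y :=
    sin_le_sin_of_le_of_le_pi_div_two (by linarith [hx.1, pi_pos]) hy.2 hxy
  have hsin0 : 0 ≤ sin x := sin_nonneg_of_nonneg_of_le_pi hx.1 (by linarith [hx.2, pi_pos])
  exact pow_le_pow_left₀ hsin0 hsin 2

lemma concaveOn_arccot_const_mul_tan {c : ℝ} (hc0 : 0 ≤ c) (hc1 : c ≤ 1) :
    ConcaveOn ℝ (Ioo 0 (π / 2)) (fun x => arccot (c * tan x)) := by
  have hcos : ∀ x ∈ Ioo 0 (π / 2), cos x ≠ 0 := fun x hx =>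
    (cos_pos_of_mem_Ioo ⟨by linarith [hx.1, pi_pos], hx.2⟩).ne'
  refine concaveOn_Ioo_of_hasDerivAt_of_antitoneOn
    (fun x hx => hasDerivAt_arccot_const_mul_tan c (hcos x hx)) ?_
  intro x hx y hy hxy
  have hsin : sin x ^ 2 ≤ sin y ^ 2 :=
    monotoneOn_sin_sq (Ioo_subset_Icc_self hx) (Ioo_subset_Icc_self hy) hxy
  have hc : 0 ≤ 1 - c ^ 2 := by nlinarith
  have hden : 1 - (1 - c ^ 2) * sin y ^ 2 ≤ 1 - (1 - c ^ 2) * sin x ^ 2 :=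
    sub_le_sub_left (mul_le_mul_of_nonneg_left hsin hc) 1
  simp only [neg_div, neg_le_neg_iff]
  exact div_le_div_of_nonneg_left hc0 (one_sub_mul_sin_sq_pos c (hcos y hy)) hden

theorem stmt2 (ρ : ℝ) (hρ : ρ ∈ Set.Ioo 0 (Real.pi / 2)) :
    ConcaveOn ℝ (Set.Ioo 0 (Real.pi / 2))
      (fun x => arccot (Real.cos ρ * Real.tan x)) :=
  concaveOn_arccot_const_mul_tan
    (cos_nonneg_of_mem_Icc ⟨by linarith [hρ.1, pi_pos], hρ.2.le⟩) (cos_le_one ρ)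
end

section
/- For every ρ ∈ (0, π/2) and all α, β ∈ (0, π/2), arccot(cos ρ · tan((α+β)/2)) ≥ (arccot(cos ρ · tan α) + arccot(cos ρ · tan β)) / 2. -/
open Real Set

lemma hasDerivAt_arctan_mul_tan (c : ℝ) {x : ℝ} (hx : cos x ≠ 0) :
    HasDerivAt (fun y => arctan (c * tan y)) (c / (1 - (1 - c ^ 2) * sin x ^ 2)) x := by
  refine ((hasDerivAt_arctan _).comp x ((hasDerivAt_tan hx).const_mul c)).congr_deriv ?_
  have hD : 1 - (1 - c ^ 2) * sin x ^ 2 = cos x ^ 2 + c ^ 2 * sin x ^ 2 := by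
    linear_combination -sin_sq_add_cos_sq x
  rw [hD, tan_eq_sin_div_cos]
  field_simp

lemma convexOn_arctan_mul_tan {c : ℝ} (hc₀ : 0 ≤ c) (hc₁ : c ≤ 1) :
    ConvexOn ℝ (Ico 0 (π / 2)) (fun x => arctan (c * tan x)) := by
  have hcos : ∀ x ∈ Ico 0 (π / 2), cos x ≠ 0 := fun x hx =>
    (cos_pos_of_mem_Ioo ⟨by linarith [hx.1, pi_pos], hx.2⟩).ne'
  have hderiv : ∀ x ∈ Ico 0 (π / 2), HasDerivAt (fun y => arctan (c * tan y))
      (c / (1 - (1 - c ^ 2) * sin x ^ 2)) x := fun x hx =>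
    hasDerivAt_arctan_mul_tan c (hcos x hx)
  refine MonotoneOn.convexOn_of_deriv (convex_Ico _ _)
    (fun x hx => (hderiv x hx).continuousAt.continuousWithinAt)
    ?_ ?_ <;> rw [interior_Ico]
  · exact fun x hx => (hderiv x (Ioo_subset_Ico_self hx)).differentiableAt.differentiableWithinAt
  intro x hx y hy hxy
  rw [(hderiv x (Ioo_subset_Ico_self hx)).deriv, (hderiv y (Ioo_subset_Ico_self hy)).deriv]
  have hsin : sin x ^ 2 ≤ sin y ^ 2 := by
    have h0 : 0 ≤ sin x := sin_nonneg_of_nonneg_of_le_pi hx.1.le (by linarith [hx.2, pi_pos])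
    have h1 : sin x ≤ sin y :=
      sin_le_sin_of_le_of_le_pi_div_two (by linarith [hx.1, pi_pos]) hy.2.le hxy
    gcongr
  have hpos : 0 < 1 - (1 - c ^ 2) * sin y ^ 2 := by
    have hcos_y : 0 < cos y := cos_pos_of_mem_Ioo ⟨by linarith [hy.1, pi_pos], hy.2⟩
    nlinarith [cos_sq_add_sin_sq y, pow_pos hcos_y 2, sq_nonneg c, sq_nonneg (sin y)]
  gcongr
  nlinarith

lemma concaveOn_arccot_mul_tan {c : ℝ} (hc₀ : 0 ≤ c) (hc₁ : c ≤ 1) :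
    ConcaveOn ℝ (Ico 0 (π / 2)) (fun x => arccot (c * tan x)) :=
  (concaveOn_const (π / 2) (convex_Ico _ _)).sub (convexOn_arctan_mul_tan hc₀ hc₁)

theorem stmt3 (ρ α β : ℝ) (hρ : ρ ∈ Set.Ioo 0 (Real.pi / 2))
    (hα : α ∈ Set.Ioo 0 (Real.pi / 2)) (hβ : β ∈ Set.Ioo 0 (Real.pi / 2)) :
    arccot (Real.cos ρ * Real.tan ((α + β) / 2)) ≥
      (arccot (Real.cos ρ * Real.tan α) + arccot (Real.cos ρ * Real.tan β)) / 2 := by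
  have hc₀ : 0 ≤ cos ρ := cos_nonneg_of_mem_Icc ⟨by linarith [hρ.1, pi_pos], hρ.2.le⟩
  have key := (concaveOn_arccot_mul_tan hc₀ (cos_le_one ρ)).2
    (Ioo_subset_Ico_self hα) (Ioo_subset_Ico_self hβ)
    (by norm_num : (0 : ℝ) ≤ 1 / 2) (by norm_num : (0 : ℝ) ≤ 1 / 2) (by norm_num)
  simp only [smul_eq_mul] at key
  rw [show 1 / 2 * α + 1 / 2 * β = (α + β) / 2 by ring] at key
  linarith
end

section
/- For every Δ ∈ (0, π/2), one has (√(9 + 8 tan²Δ) − 3)/(2 tan Δ) < (√(2 + 2 tan²Δ) − √2)/tan Δ. -/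
/-- Squaring, the gap between the two sides is `(12√2 - 16)(s - 1)`, positive since `288 > 256`. -/
lemma sqrt_eight_mul_sq_add_one_lt {s : ℝ} (hs : 1 < s) :
    Real.sqrt (8 * s ^ 2 + 1) < 3 + 2 * Real.sqrt 2 * (s - 1) := by
  have hsqrt2_sq : Real.sqrt 2 ^ 2 = 2 := Real.sq_sqrt (by norm_num)
  have hsqrt2 : 4 / 3 < Real.sqrt 2 := by
    rw [Real.lt_sqrt (by norm_num)]
    norm_num
  rw [Real.sqrt_lt' (by nlinarith)]
  nlinarith [mul_pos (sub_pos.mpr hsqrt2) (sub_pos.mpr hs)]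

lemma sqrt_nine_add_eight_mul_sq_sub_three_lt {t : ℝ} (ht : t ≠ 0) :
    (Real.sqrt (9 + 8 * t ^ 2) - 3) / 2 < Real.sqrt (2 + 2 * t ^ 2) - Real.sqrt 2 := by
  set s := Real.sqrt (1 + t ^ 2)
  have hs_sq : s ^ 2 = 1 + t ^ 2 := Real.sq_sqrt (by positivity)
  have hs : 1 < s := Real.lt_sqrt_of_sq_lt (by nlinarith [pow_pos (abs_pos.mpr ht) 2, sq_abs t])
  have h9 : 9 + 8 * t ^ 2 = 8 * s ^ 2 + 1 := by rw [hs_sq]; ring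
  have h2 : Real.sqrt (2 + 2 * t ^ 2) = Real.sqrt 2 * s := by
    rw [← Real.sqrt_mul (by norm_num)]; ring_nf
  rw [h9, h2]
  linarith [sqrt_eight_mul_sq_add_one_lt hs]

theorem stmt4 (Δ : ℝ) (hΔ : Δ ∈ Set.Ioo 0 (Real.pi / 2)) :
    (Real.sqrt (9 + 8 * Real.tan Δ ^ 2) - 3) / (2 * Real.tan Δ) <
      (Real.sqrt (2 + 2 * Real.tan Δ ^ 2) - Real.sqrt 2) / Real.tan Δ := by
  have htan : 0 < Real.tan Δ := Real.tan_pos_of_pos_of_lt_pi_div_two hΔ.1 hΔ.2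
  rw [← div_div]
  exact div_lt_div_of_pos_right (sqrt_nine_add_eight_mul_sq_sub_three_lt htan.ne') htan
end

section
/- Let c ∈ (0, 1/4) and let g(x) = 1 − c/x² − √(1 − c/(x(1−x))) on the interval I = (1/2, 1/2 + √(1/4 − c)). Then g has exactly one zero x₀ in I, g < 0 on (1/2, x₀), and g > 0 on (x₀, 1/2 + √(1/4 − c)). -/
/-!
On `I`, `a = 1 - c / x²` is positive and `b = 1 - c / (x (1 - x))` nonnegative, so `g = a - √b`
has the sign of `a² - b = c / (x⁴ (1 - x)) · (3x³ - 2x² + c (1 - x))`. The cubic factor is strictly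
increasing on `[1/2, ∞)`, negative at `1/2` and positive at the right endpoint of `I`, so it changes
sign exactly once in `I`, and `g` with it.
-/

open Set

lemma Real.sign_sub_sqrt {a b : ℝ} (ha : 0 < a) (hb : 0 ≤ b) :
    SignType.sign (a - √b) = SignType.sign (a ^ 2 - b) := by
  have hsum : 0 < a + √b := by positivity
  rw [show a ^ 2 - b = (a - √b) * (a + √b) by linear_combination Real.sq_sqrt hb, sign_mul,
    sign_pos hsum, mul_one]

lemma StrictMonoOn.sign_apply_eq_sign_sub {α β : Type*} [AddGroup α] [LinearOrder α]
    [AddRightStrictMono α] [Zero β] [LinearOrder β] {f : α → β} {s : Set α}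
    (hf : StrictMonoOn f s) {x₀ x : α} (hx₀ : x₀ ∈ s) (hx : x ∈ s) (hfx₀ : f x₀ = 0) :
    SignType.sign (f x) = SignType.sign (x - x₀) := by
  rcases lt_trichotomy x x₀ with h | rfl | h
  · rw [sign_neg (hfx₀ ▸ hf hx hx₀ h), sign_neg (sub_neg.mpr h)]
  · simp [hfx₀]
  · rw [sign_pos (hfx₀ ▸ hf hx₀ hx h), sign_pos (sub_pos.mpr h)]

/-- The cubic whose roots in `I` are the zeros of `g`. -/
def cubic (c x : ℝ) : ℝ := 3 * x ^ 3 - 2 * x ^ 2 + c * (1 - x)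

lemma cubic_half (c : ℝ) : cubic c (1 / 2) = (c - 1 / 4) / 2 := by
  unfold cubic; ring

lemma cubic_half_add (s : ℝ) : cubic (1 / 4 - s ^ 2) (1 / 2 + s) = 2 * s ^ 2 * (1 + 2 * s) := by
  unfold cubic; ring

lemma strictMonoOn_cubic {c : ℝ} (hc : c < 1 / 4) : StrictMonoOn (cubic c) (Ici (1 / 2)) := by
  intro x hx y hy hxy
  simp only [mem_Ici] at hx hy
  -- `cubic c y - cubic c x = (y - x) (3 (x² + xy + y²) - 2 (x + y) - c)`
  have hslope : 0 < 3 * (x ^ 2 + x * y + y ^ 2) - 2 * (x + y) - c := by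
    nlinarith [mul_nonneg (sub_nonneg.mpr hx) (sub_nonneg.mpr hy)]
  unfold cubic
  nlinarith [mul_pos (sub_pos.mpr hxy) hslope]

lemma sign_g_eq_sign_cubic {c x : ℝ} (hc : 0 < c) (hx : 1 / 2 < x) (hcx : c < x * (1 - x)) :
    SignType.sign (1 - c / x ^ 2 - √(1 - c / (x * (1 - x)))) = SignType.sign (cubic c x) := by
  have hx0 : 0 < x := by linarith
  have hx1 : 0 < 1 - x := by nlinarith
  have hxx : 0 < x * (1 - x) := by positivity
  have ha : 0 < 1 - c / x ^ 2 := by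
    rw [sub_pos, div_lt_one (by positivity)]; nlinarith
  have hb : 0 ≤ 1 - c / (x * (1 - x)) := by
    rw [sub_nonneg, div_le_one hxx]; exact hcx.le
  have hfactor : (1 - c / x ^ 2) ^ 2 - (1 - c / (x * (1 - x))) =
      c / (x ^ 4 * (1 - x)) * cubic c x := by
    unfold cubic; field_simp; ring
  rw [Real.sign_sub_sqrt ha hb, hfactor, sign_mul, sign_pos (by positivity), one_mul]

lemma lt_mul_one_sub_of_mem_Ioo {c x : ℝ} (hx : x ∈ Ioo (1 / 2) (1 / 2 + √(1 / 4 - c))) :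
    c < x * (1 - x) := by
  have hsq : (x - 1 / 2) ^ 2 < 1 / 4 - c :=
    (Real.lt_sqrt (by linarith [hx.1])).mp (by linarith [hx.2])
  nlinarith

theorem stmt17 (c : ℝ) (hc : c ∈ Set.Ioo (0 : ℝ) (1/4)) (g : ℝ → ℝ)
    (hg : ∀ x, g x = 1 - c / x ^ 2 - Real.sqrt (1 - c / (x * (1 - x)))) :
    ∃ x₀ ∈ Set.Ioo (1/2 : ℝ) (1/2 + Real.sqrt (1/4 - c)),
      g x₀ = 0 ∧
      (∀ x ∈ Set.Ioo (1/2 : ℝ) (1/2 + Real.sqrt (1/4 - c)), g x = 0 → x = x₀) ∧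
      (∀ x ∈ Set.Ioo (1/2 : ℝ) x₀, g x < 0) ∧
      (∀ x ∈ Set.Ioo x₀ (1/2 + Real.sqrt (1/4 - c)), g x > 0) := by
  obtain ⟨hc0, hc4⟩ := hc
  set s := √(1 / 4 - c) with hs
  have hs0 : 0 < s := Real.sqrt_pos.mpr (by linarith)
  have hcs : c = 1 / 4 - s ^ 2 := by rw [hs, Real.sq_sqrt (by linarith)]; ring
  have hchange : cubic c (1 / 2) < 0 ∧ 0 < cubic c (1 / 2 + s) := by
    refine ⟨by rw [cubic_half]; linarith, ?_⟩
    rw [hcs, cubic_half_add]; positivity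
  obtain ⟨x₀, hx₀, hroot⟩ := intermediate_value_Ioo (by linarith)
    (show Continuous (cubic c) by unfold cubic; fun_prop).continuousOn hchange
  have hsign : ∀ x ∈ Ioo (1 / 2) (1 / 2 + s), SignType.sign (g x) = SignType.sign (x - x₀) :=
    fun x hx => by
      rw [hg, sign_g_eq_sign_cubic hc0 hx.1 (lt_mul_one_sub_of_mem_Ioo hx)]
      exact (strictMonoOn_cubic hc4).sign_apply_eq_sign_sub hx₀.1.le hx.1.le hroot
  refine ⟨x₀, hx₀, ?_, fun x hx hgx => ?_, fun x hx => ?_, fun x hx => ?_⟩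
  · simpa [sign_eq_zero_iff] using hsign x₀ hx₀
  · exact sub_eq_zero.mp (sign_eq_zero_iff.mp (by rw [← hsign x hx, hgx, sign_zero]))
  · simpa [sign_eq_neg_one_iff, hx.2] using hsign x ⟨hx.1, hx.2.trans hx₀.2⟩
  · simpa [sign_eq_one_iff, hx.1] using hsign x ⟨hx₀.1.trans hx.1, hx.2⟩
end
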